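/- arXiv:0912.2088 — 4 statements merged into one kernel-verified Lean document; each statement's English description precedes it below -/
import Mathlib

section
/- Left cancellation condition (LF3) for E-weak equivalences: if f, g : A → B are parallel morphisms in T and s : A' → A is an E-weak equivalence with f ∘ s = g ∘ s, then there exists an E-weak equivalence t : B → B' with t ∘ f = t ∘ g. -/
open CategoryTheory Category Limits Pretriangulated Triangulated

namespace CategoryTheory.Triangulated

/-- The former Mathlib structure `Triangulated.Subcategory` (removed upstream), with its
old meaning. -/
structure Subcategory (C : Type*) [Category C] [HasZeroObject C] [HasShift C ℤ]
    [Preadditive C] [∀ n : ℤ, (shiftFunctor C n).Additive] [Pretriangulated C] where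
  P : C → Prop
  zero' : ∃ (Z : C) (_ : IsZero Z), P Z
  shift (X : C) (n : ℤ) : P X → P (X⟦n⟧)
  ext₂' (T : Triangle C) (_ : T ∈ distTriang C) : P T.obj₁ → P T.obj₃ →
    ObjectProperty.isoClosure P T.obj₂

/-- The former `Triangulated.Subcategory.W`: morphisms whose cone satisfies `S.P`. -/
def Subcategory.W {C : Type*} [Category C] [HasZeroObject C] [HasShift C ℤ]
    [Preadditive C] [∀ n : ℤ, (shiftFunctor C n).Additive] [Pretriangulated C]
    (S : Subcategory C) : MorphismProperty C :=
  fun X Y f => ∃ (Z : C) (g : Y ⟶ Z) (h : Z ⟶ X⟦(1 : ℤ)⟧)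
    (_ : Triangle.mk f g h ∈ distTriang C), S.P Z

end CategoryTheory.Triangulated

/-!
Since `s ≫ (f - g) = 0` and `A' ⟶ A ⟶ Z ⟶ A'⟦1⟧` is distinguished with `Z` in `E`, the morphism
`f - g` factors as `A ⟶ Z ⟶ B`. Completing `u : Z ⟶ B` to a distinguished triangle
`Z ⟶ B ⟶ B' ⟶ Z⟦1⟧` gives `t : B ⟶ B'` with `u ≫ t = 0`, hence `(f - g) ≫ t = 0`, and the rotated
triangle shows that the cone of `t` is `Z⟦1⟧`, which lies in `E`.
-/

namespace CategoryTheory.Triangulated.Subcategory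

variable {C : Type*} [Category C] [HasZeroObject C] [HasShift C ℤ] [Preadditive C]
  [∀ n : ℤ, (shiftFunctor C n).Additive] [Pretriangulated C] (S : Subcategory C)

lemma W_mor₂_of_distTriang {Z Y Y' : C} (u : Z ⟶ Y) (t : Y ⟶ Y') (d : Y' ⟶ Z⟦(1 : ℤ)⟧)
    (hT : Triangle.mk u t d ∈ distTriang C) (hZ : S.P Z) : S.W t :=
  ⟨Z⟦(1 : ℤ)⟧, d, -u⟦(1 : ℤ)⟧', rot_of_distTriang _ hT, S.shift _ _ hZ⟩

lemma exists_W_comp_eq_zero_of_P {Z Y : C} (u : Z ⟶ Y) (hZ : S.P Z) :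
    ∃ (Y' : C) (t : Y ⟶ Y'), S.W t ∧ u ≫ t = 0 := by
  obtain ⟨Y', t, d, hT⟩ := distinguished_cocone_triangle u
  exact ⟨Y', t, S.W_mor₂_of_distTriang u t d hT hZ, comp_distTriang_mor_zero₁₂ _ hT⟩

lemma exists_W_comp_eq_zero_of_W_comp_eq_zero {X' X Y : C} (s : X' ⟶ X) (hs : S.W s)
    (h : X ⟶ Y) (hsh : s ≫ h = 0) : ∃ (Y' : C) (t : Y ⟶ Y'), S.W t ∧ h ≫ t = 0 := by
  obtain ⟨Z, q, w, hT, hZ⟩ := hs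
  obtain ⟨u, rfl⟩ : ∃ u : Z ⟶ Y, h = q ≫ u := Triangle.yoneda_exact₂ _ hT h hsh
  obtain ⟨Y', t, ht, hut⟩ := S.exists_W_comp_eq_zero_of_P u hZ
  exact ⟨Y', t, ht, by rw [assoc, hut, comp_zero]⟩

end CategoryTheory.Triangulated.Subcategory

/-- **Left cancellation condition (LF3) for `E`-weak equivalences.**
If `f, g : A ⟶ B` are parallel morphisms in a triangulated category `T` and
`s : A' ⟶ A` is an `E`-weak equivalence with `f ∘ s = g ∘ s`, then there is an
`E`-weak equivalence `t : B ⟶ B'` with `t ∘ f = t ∘ g`. -/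
theorem left_cancellation {T : Type*} [Category T] [HasZeroObject T] [Preadditive T]
    [HasShift T ℤ] [∀ n : ℤ, (shiftFunctor T n).Additive] [Pretriangulated T]
    [IsTriangulated T] (E : Triangulated.Subcategory T) [ObjectProperty.IsClosedUnderIsomorphisms E.P]
    (hthick : ∀ ⦃X Y : T⦄ (i : X ⟶ Y) (r : Y ⟶ X), i ≫ r = 𝟙 X → E.P Y → E.P X)
    {A A' B : T} (f g : A ⟶ B) (s : A' ⟶ A) (hs : E.W s) (hfg : s ≫ f = s ≫ g) :
    ∃ (B' : T) (t : B ⟶ B'), E.W t ∧ f ≫ t = g ≫ t := by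
  obtain ⟨B', t, ht, hfgt⟩ := E.exists_W_comp_eq_zero_of_W_comp_eq_zero s hs (f - g)
    (by rw [Preadditive.comp_sub, hfg, sub_self])
  exact ⟨B', t, ht, sub_eq_zero.mp (by rwa [← Preadditive.sub_comp])⟩
end

section
/- For a homological functor F : T ⥤ Ab admitting a pointwise left Kan extension RF along the localization functor L : T ⥤ T/W, with unit η : F ⟶ L ⋙ RF, the natural transformation η is an isomorphism if and only if F(E) is a zero object for every object E of E. -/
open CategoryTheory Category Limits Pretriangulated Triangulated

/-!
A left Kan extension along a localization `L` has an invertible unit exactly when `F` inverts `W`: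
if `F` inverts `W` then `F` factors through `L`, and the factorization is already a left Kan
extension; conversely `F ≅ L ⋙ RF` inverts `W` because `L` does. For a homological `F`, inverting
the `E`-weak equivalences amounts to vanishing on `E`: each `X` in `E` is the cone of `X ⟶ 0`, and
conversely the long exact sequence of a triangle `X ⟶ Y ⟶ Z ⟶ X⟦1⟧` with `Z` in `E` shows that
`F` maps `X ⟶ Y` to an isomorphism.
-/

namespace CategoryTheory

open ZeroObject

lemma Functor.isIso_unit_iff_isInvertedBy {C D H : Type*} [Category C] [Category D] [Category H]
    (L : C ⥤ D) (W : MorphismProperty C) [L.IsLocalization W] {F : C ⥤ H} (RF : D ⥤ H)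
    (α : F ⟶ L ⋙ RF) [RF.IsLeftKanExtension α] :
    IsIso α ↔ W.IsInvertedBy F := by
  have : RF.IsRightDerivedFunctor α W := ⟨inferInstance⟩
  refine ⟨fun _ => ?_, fun hF => isIso_of_isRightDerivedFunctor_of_inverts RF α hF⟩
  rw [MorphismProperty.IsInvertedBy.iff_of_iso W (asIso α)]
  exact MorphismProperty.IsInvertedBy.of_comp W L (Localization.inverts L W) RF

namespace Triangulated.Subcategory

variable {C : Type*} [Category C] [HasZeroObject C] [HasShift C ℤ] [Preadditive C]
  [∀ n : ℤ, (shiftFunctor C n).Additive] [Pretriangulated C] (S : Subcategory C)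

lemma W_zero_of_P {X : C} (hX : S.P X) : S.W (0 : X ⟶ 0) :=
  ⟨_, _, _, rot_of_distTriang _ (contractible_distinguished X), S.shift X 1 hX⟩

lemma isZero_obj_of_isInvertedBy {A : Type*} [Category A] [HasZeroMorphisms A] (F : C ⥤ A)
    [F.PreservesZeroMorphisms] (hF : S.W.IsInvertedBy F) {X : C} (hX : S.P X) :
    IsZero (F.obj X) :=
  have : IsIso (F.map (0 : X ⟶ 0)) := hF _ (S.W_zero_of_P hX)
  (F.map_isZero (isZero_zero C)).of_iso (asIso (F.map (0 : X ⟶ 0)))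

variable {A : Type*} [Category A] [Abelian A] (F : C ⥤ A) [F.IsHomological]

lemma isInvertedBy_W_of_isZero_obj (hF : ∀ X, S.P X → IsZero (F.obj X)) :
    S.W.IsInvertedBy F := by
  rintro X Y f ⟨Z, g, h, hT, hZ⟩
  have hepi : Epi (F.map f) :=
    (F.map_distinguished_exact _ hT).epi_f ((hF Z hZ).eq_of_tgt _ _)
  have hmono : Mono (F.map f) :=
    (F.map_distinguished_exact _ (inv_rot_of_distTriang _ hT)).mono_g
      ((hF _ (S.shift Z (-1) hZ)).eq_of_src _ _)
  exact isIso_of_mono_of_epi _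

lemma isInvertedBy_W_iff : S.W.IsInvertedBy F ↔ ∀ X, S.P X → IsZero (F.obj X) :=
  ⟨fun hF _ => S.isZero_obj_of_isInvertedBy F hF, S.isInvertedBy_W_of_isZero_obj F⟩

end Triangulated.Subcategory

end CategoryTheory

/-- For a homological functor `F : T ⥤ Ab` admitting a pointwise left Kan
extension `RF` along the localization functor `L = E.W.Q : T ⥤ T/W`, with unit
`η : F ⟶ L ⋙ RF`, the natural transformation `η` is an isomorphism if and only
if `F(X)` is a zero object for every object `X` of the thick subcategory `E`. -/
theorem unit_isIso_iff_vanishes_on_subcategory {T : Type*} [Category T]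
    [HasZeroObject T] [Preadditive T] [HasShift T ℤ]
    [∀ n : ℤ, (shiftFunctor T n).Additive] [Pretriangulated T] [IsTriangulated T]
    (E : Triangulated.Subcategory T) [ObjectProperty.IsClosedUnderIsomorphisms E.P]
    (hthick : ∀ ⦃X Y : T⦄ (i : X ⟶ Y) (r : Y ⟶ X), i ≫ r = 𝟙 X → E.P Y → E.P X)
    (F : T ⥤ Ab) [F.IsHomological]
    [(E.W.Q).HasPointwiseLeftKanExtension F] :
    IsIso ((E.W.Q).pointwiseLeftKanExtensionUnit F) ↔
      (∀ X : T, E.P X → IsZero (F.obj X)) := by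
  rw [Functor.isIso_unit_iff_isInvertedBy E.W.Q E.W, E.isInvertedBy_W_iff]
end

section
/- The right colocalisation of a homological functor is homological: for every homological functor F : T ⥤ Ab and every distinguished triangle B' → B → B'' → B'[1] in T, the sequence R⊥F(B') → R⊥F(B) → R⊥F(B'') is exact at R⊥F(B), where the maps are induced by postcomposition with the morphisms B' → B and B → B'' on the indexing categories Subo. -/
open CategoryTheory Category Limits Pretriangulated Triangulated

universe u

variable {T : Type u} [SmallCategory T] [HasZeroObject T] [Preadditive T]
  [HasShift T ℤ] [∀ n : ℤ, (shiftFunctor T n).Additive] [Pretriangulated T]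

variable (E : Triangulated.Subcategory T)

/-- `Subo(B)`: full subcategory of `Over B` on morphisms `s : X ⟶ B` with `X` in `E`. -/
abbrev SuboCat (B : T) := ObjectProperty.FullSubcategory (fun f : Over B => E.P f.left)

/-- The diagram `(s : X ⟶ B) ↦ F(X)` on `Subo(B)`. -/
def suboDiagram (F : T ⥤ Ab.{u}) (B : T) : SuboCat E B ⥤ Ab.{u} :=
  ObjectProperty.ι _ ⋙ Over.forget B ⋙ F

/-- The right colocalisation `R⊥F(B) := colim_{Subo(B)} F(X)`. -/
noncomputable abbrev coloc (F : T ⥤ Ab.{u}) (B : T) : Ab.{u} :=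
  colimit (suboDiagram E F B)
/-- The map `R⊥F(B) ⟶ R⊥F(B')` induced by `f : B ⟶ B'` via postcomposition. -/
noncomputable abbrev colocMap (F : T ⥤ Ab.{u}) {B B' : T} (f : B ⟶ B') :
    coloc E F B ⟶ coloc E F B' :=
  colimit.desc (suboDiagram E F B)
    { pt := coloc E F B'
      ι :=
        { app := fun X => colimit.ι (suboDiagram E F B') ⟨Over.mk (X.obj.hom ≫ f), X.property⟩
          naturality := by
            intro X Y g
            dsimp only [Functor.const_obj_obj, Functor.const_obj_map]
            refine Eq.trans ?_ (comp_id _).symm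
            exact colimit.w (suboDiagram E F B')
              (show (⟨Over.mk (X.obj.hom ≫ f), X.property⟩ : SuboCat E B') ⟶
                  ⟨Over.mk (Y.obj.hom ≫ f), Y.property⟩ from
                ObjectProperty.homMk (Over.homMk g.hom.left (by dsimp; rw [← assoc, Over.w g.hom]))) } }

@[simp]
lemma ι_colocMap (F : T ⥤ Ab.{u}) {B B' : T} (f : B ⟶ B') (X : SuboCat E B) :
    colimit.ι (suboDiagram E F B) X ≫ colocMap E F f =
      colimit.ι (suboDiagram E F B') ⟨Over.mk (X.obj.hom ≫ f), X.property⟩ :=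
  colimit.ι_desc _ _

lemma coloc_ι_eq (F : T ⥤ Ab.{u}) {B : T} {A : T} {f g : A ⟶ B} (hA : E.P A) (hfg : f = g) :
    colimit.ι (suboDiagram E F B) ⟨Over.mk f, hA⟩ =
      colimit.ι (suboDiagram E F B) ⟨Over.mk g, hA⟩ := by
  subst hfg; rfl

/-!
`Subo(B)` is filtered (objects are joined by biproducts, and the cone of `u - v` coequalises
`u` and `v`), so a class `[a]` with `a ∈ F(X)`, `s : X ⟶ B` vanishes in `R⊥F(B)` iff `F(c) a = 0`
for some map `c : X ⟶ X'` of `Subo(B)`. If `R⊥F(g) [a] = 0`, take such a `c` over `s ≫ g` and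
complete it to a triangle `K ⟶ X ⟶ X'`: then `K ∈ E`, `a` lifts to `F(K)` since `F` is homological,
and `K ⟶ X ⟶ B` is killed by `g`, so it factors through `f`, exhibiting `[a]` in the image of
`R⊥F(f)`.
-/

universe v

namespace CategoryTheory.Triangulated.Subcategory

variable {C : Type*} [Category C] [HasZeroObject C] [HasShift C ℤ]
    [Preadditive C] [∀ n : ℤ, (shiftFunctor C n).Additive] [Pretriangulated C]
    (S : Subcategory C) [ObjectProperty.IsClosedUnderIsomorphisms S.P]

open ZeroObject in
lemma zero : S.P 0 := by
  obtain ⟨Z, hZ, hP⟩ := S.zero'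
  exact ObjectProperty.prop_of_iso _ hZ.isoZero hP

lemma ext₂ (T : Triangle C) (hT : T ∈ distTriang C) (h₁ : S.P T.obj₁) (h₃ : S.P T.obj₃) :
    S.P T.obj₂ := by
  obtain ⟨Y, hY, ⟨e⟩⟩ := S.ext₂' T hT h₁ h₃
  exact ObjectProperty.prop_of_iso _ e.symm hY

lemma ext₁ (T : Triangle C) (hT : T ∈ distTriang C) (h₂ : S.P T.obj₂) (h₃ : S.P T.obj₃) :
    S.P T.obj₁ :=
  S.ext₂ _ (inv_rot_of_distTriang _ hT) (S.shift _ (-1) h₃) h₂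

lemma ext₃ (T : Triangle C) (hT : T ∈ distTriang C) (h₁ : S.P T.obj₁) (h₂ : S.P T.obj₂) :
    S.P T.obj₃ :=
  S.ext₂ _ (rot_of_distTriang _ hT) h₂ (S.shift _ 1 h₁)

lemma exists_preimage_of_map_eq_zero (F : C ⥤ Ab.{v}) [F.IsHomological]
    {X X' : C} (c : X ⟶ X') (hX : S.P X) (hX' : S.P X') (a : F.obj X) (ha : F.map c a = 0) :
    ∃ (K : C) (_ : S.P K) (k : K ⟶ X) (b : F.obj K), k ≫ c = 0 ∧ F.map k b = a := by
  obtain ⟨K, k, d, hK⟩ := distinguished_cocone_triangle₁ c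
  have hexact := (ShortComplex.ab_exact_iff _).mp (F.map_distinguished_exact _ hK)
  obtain ⟨b, hb⟩ := hexact a ha
  exact ⟨K, S.ext₁ _ hK hX hX', k, b, comp_distTriang_mor_zero₁₂ _ hK, hb⟩

end CategoryTheory.Triangulated.Subcategory

lemma AddCommGrpCat.colimit_rep_eq_zero {J : Type u} [SmallCategory J] [IsFiltered J]
    (G : J ⥤ Ab.{u}) {j : J} (x : G.obj j) (hx : colimit.ι G j x = 0) :
    ∃ (j' : J) (i : j ⟶ j'), G.map i x = 0 := by
  rw [← map_zero (colimit.ι G j).hom, Concrete.colimit_rep_eq_iff_exists] at hx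
  obtain ⟨j', i, i', hi⟩ := hx
  exact ⟨j', i, by rw [hi, map_zero]⟩

section Subo

variable [ObjectProperty.IsClosedUnderIsomorphisms E.P]

open ZeroObject in
instance (B : T) : Nonempty (SuboCat E B) :=
  ⟨⟨Over.mk (0 : (0 : T) ⟶ B), E.zero⟩⟩

instance (B : T) : IsFilteredOrEmpty (SuboCat E B) where
  cocone_objs X Y :=
    ⟨⟨Over.mk (biprod.desc X.obj.hom Y.obj.hom),
      E.ext₂ _ (binaryBiproductTriangle_distinguished X.obj.left Y.obj.left)
        X.property Y.property⟩,
      ObjectProperty.homMk (Over.homMk biprod.inl (by simp)),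
      ObjectProperty.homMk (Over.homMk biprod.inr (by simp)), trivial⟩
  cocone_maps X Y u v := by
    obtain ⟨Q, p, q, hQ⟩ := distinguished_cocone_triangle (u.hom.left - v.hom.left)
    have huv : (u.hom.left - v.hom.left) ≫ Y.obj.hom = 0 := by
      rw [Preadditive.sub_comp, Over.w u.hom, Over.w v.hom, sub_self]
    obtain ⟨t, ht⟩ := Triangle.yoneda_exact₂ _ hQ Y.obj.hom huv
    have hp : u.hom.left ≫ p = v.hom.left ≫ p := by
      rw [← sub_eq_zero, ← Preadditive.sub_comp]
      exact comp_distTriang_mor_zero₁₂ _ hQ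
    exact ⟨⟨Over.mk t, E.ext₃ _ hQ X.property Y.property⟩,
      ObjectProperty.homMk (Over.homMk p ht.symm),
      ObjectProperty.hom_ext _ (Over.OverMorphism.ext hp)⟩

instance (B : T) : IsFiltered (SuboCat E B) where

end Subo

section Coloc

variable (F : T ⥤ Ab.{u})

lemma ι_colocMap_apply {B B' : T} (f : B ⟶ B') (X : SuboCat E B)
    (a : (suboDiagram E F B).obj X) :
    colocMap E F f (colimit.ι (suboDiagram E F B) X a) =
      colimit.ι (suboDiagram E F B') ⟨Over.mk (X.obj.hom ≫ f), X.property⟩ a :=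
  ConcreteCategory.congr_hom (ι_colocMap E F f X) a

lemma map_comp_coloc_ι {B K : T} (X : SuboCat E B) (k : K ⟶ X.obj.left) (hK : E.P K) :
    F.map k ≫ colimit.ι (suboDiagram E F B) X =
      colimit.ι (suboDiagram E F B) ⟨Over.mk (k ≫ X.obj.hom), hK⟩ :=
  colimit.w (suboDiagram E F B)
    (ObjectProperty.homMk (Over.homMk k rfl) : (⟨Over.mk (k ≫ X.obj.hom), hK⟩ : SuboCat E B) ⟶ X)

lemma coloc_ι_zero [F.PreservesZeroMorphisms] {B A : T} (hA : E.P A) :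
    colimit.ι (suboDiagram E F B) ⟨Over.mk (0 : A ⟶ B), hA⟩ = 0 :=
  (coloc_ι_eq E F hA (zero_comp (X := A) (Z := B)).symm).trans <|
    (map_comp_coloc_ι E F ⟨Over.mk 0, hA⟩ 0 hA).symm.trans (by rw [F.map_zero]; exact zero_comp)

lemma colocMap_comp {B B' B'' : T} (f : B ⟶ B') (g : B' ⟶ B'') :
    colocMap E F (f ≫ g) = colocMap E F f ≫ colocMap E F g := by
  refine colimit.hom_ext fun X => ?_
  rw [← assoc]
  exact (ι_colocMap E F (f ≫ g) X).trans <|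
    (coloc_ι_eq E F (B := B'') X.property (assoc _ _ _).symm).trans <|
      (ι_colocMap E F g _).symm.trans (congrArg (· ≫ colocMap E F g) (ι_colocMap E F f X).symm)

lemma colocMap_zero [F.PreservesZeroMorphisms] (B B' : T) :
    colocMap E F (0 : B ⟶ B') = 0 := by
  refine colimit.hom_ext fun X => ?_
  rw [ι_colocMap, coloc_ι_eq E F X.property (comp_zero (f := X.obj.hom)), coloc_ι_zero, comp_zero]
  rfl

lemma exists_colocMap_eq_of_colocMap_eq_zero [ObjectProperty.IsClosedUnderIsomorphisms E.P]
    [F.IsHomological] {B' B B'' : T} {f : B' ⟶ B} {g : B ⟶ B''} {h : B'' ⟶ B'⟦(1:ℤ)⟧}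
    (hT : Triangle.mk f g h ∈ distTriang T) (y : coloc E F B) (hy : colocMap E F g y = 0) :
    ∃ x, colocMap E F f x = y := by
  obtain ⟨X, a, rfl⟩ := Concrete.colimit_exists_rep (suboDiagram E F B) y
  rw [ι_colocMap_apply] at hy
  obtain ⟨X', c, hc⟩ := AddCommGrpCat.colimit_rep_eq_zero _ _ hy
  obtain ⟨K, hK, k, b, hkc, rfl⟩ :=
    E.exists_preimage_of_map_eq_zero F c.hom.left X.property X'.property a hc
  have hcg : c.hom.left ≫ X'.obj.hom = X.obj.hom ≫ g := Over.w c.hom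
  have hkg : (k ≫ X.obj.hom) ≫ g = 0 := by
    rw [assoc, ← hcg, ← assoc, hkc, zero_comp]
  obtain ⟨u, hu⟩ := Triangle.coyoneda_exact₂ _ hT _ hkg
  have hι := coloc_ι_eq E F (B := B) (f := u ≫ f) (g := k ≫ X.obj.hom) hK hu.symm
  exact ⟨colimit.ι (suboDiagram E F B') ⟨Over.mk u, hK⟩ b,
    (ι_colocMap_apply E F f ⟨Over.mk u, hK⟩ b).trans <| (ConcreteCategory.congr_hom hι b).trans
      (ConcreteCategory.congr_hom (map_comp_coloc_ι E F X k hK) b).symm⟩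

end Coloc

theorem colocalisation_isHomological [ObjectProperty.IsClosedUnderIsomorphisms E.P]
    (F : T ⥤ Ab.{u}) [F.IsHomological]
    {B' B B'' : T} (f : B' ⟶ B) (g : B ⟶ B'') (h : B'' ⟶ B'⟦(1:ℤ)⟧)
    (hT : Triangle.mk f g h ∈ distTriang T) :
    Function.Exact ⇑(colocMap E F f) ⇑(colocMap E F g) := by
  refine fun y => ⟨exists_colocMap_eq_of_colocMap_eq_zero E F hT y, ?_⟩
  rintro ⟨x, rfl⟩
  have hfg : f ≫ g = 0 := comp_distTriang_mor_zero₁₂ _ hT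
  rw [← ConcreteCategory.comp_apply, ← colocMap_comp, hfg, colocMap_zero]
  rfl
end

section
/- A natural transformation of homological functors whose localisation and colocalisation are invertible is invertible: let Φ : F ⟶ F' be a natural transformation between homological functors F, F' : T ⥤ Ab. If for every object B of T both induced maps RΦ_B : RF(B) → RF'(B) (on the colimits over Wo(B)) and R⊥Φ_B : R⊥F(B) → R⊥F'(B) (on the colimits over Subo(B)) are isomorphisms, then Φ_B : F(B) → F'(B) is an isomorphism for every B. -/
/-!
Over a filtered index category, a colimit map of abelian groups `colim φ` is bijective exactly
when every element killed by `φ` dies at a later stage and every element of the target is hit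
by `φ` after moving to a later stage. Both `Wo(B)` (by the calculus of left fractions for `W`)
and `Subo(B)` are filtered, so the hypotheses become statements about elements, and a diagram
chase through distinguished triangles does the rest.

Surjectivity: lift `x' ∈ F'(B)` along some `s : B ⟶ C` in `W` to `y ∈ F(C)`. The obstruction
`F(p) y` lives on the cone `E₀` of `s` and is killed by `Φ`, hence it dies along some
`E₀ ⟶ E₁` over `B⟦1⟧` in `Subo(B⟦1⟧)`; replacing `s` by the map `B ⟶ D` completing
`E₁ ⟶ B⟦1⟧` to a distinguished triangle kills it. Then `x'` agrees with `Φ_B` of a preimage up to an element coming from `E₁⟦-1⟧ ∈ E`, which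
the colocalisation puts in the image of `Φ_B`. Injectivity is a similar chase, which
needs surjectivity at `C⟦-1⟧`.
-/

open CategoryTheory Category Limits Pretriangulated Triangulated

universe u

variable {T : Type u} [SmallCategory T] [HasZeroObject T] [Preadditive T]
  [HasShift T ℤ] [∀ n : ℤ, (shiftFunctor T n).Additive] [Pretriangulated T]

variable (E : Triangulated.Subcategory T)

/-- A natural transformation `Φ : F ⟶ F'` induces a natural transformation of
diagrams on `Subo(B)`. -/
def suboWhisker {F F' : T ⥤ Ab.{u}} (Φ : F ⟶ F') (B : T) :
    suboDiagram E F B ⟶ suboDiagram E F' B where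
  app X := Φ.app X.obj.left
  naturality := by
    intro X Y g
    dsimp [suboDiagram]
    exact Φ.naturality g.hom.left

/-- The map `R⊥Φ_B : R⊥F(B) ⟶ R⊥F'(B)` induced by `Φ : F ⟶ F'`. -/
noncomputable def colocMapNat {F F' : T ⥤ Ab.{u}} (Φ : F ⟶ F') (B : T) :
    coloc E F B ⟶ coloc E F' B :=
  colimMap (suboWhisker E Φ B)

/-- `Wo(B)`: full subcategory of `Under B` on morphisms `s : B ⟶ C` that are
`E`-weak equivalences. -/
abbrev WoCat (B : T) := ObjectProperty.FullSubcategory (fun f : Under B => E.W f.hom)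

/-- The diagram `(s : B ⟶ C) ↦ F(C)` on `Wo(B)`. -/
def woDiagram (F : T ⥤ Ab.{u}) (B : T) : WoCat E B ⥤ Ab.{u} :=
  ObjectProperty.ι _ ⋙ Under.forget B ⋙ F

/-- The right localisation `RF(B) := colim_{Wo(B)} F(C)`. -/
noncomputable abbrev loc (F : T ⥤ Ab.{u}) (B : T) : Ab.{u} :=
  colimit (woDiagram E F B)

/-- A natural transformation `Φ : F ⟶ F'` induces a natural transformation of
diagrams on `Wo(B)`. -/
def woWhisker {F F' : T ⥤ Ab.{u}} (Φ : F ⟶ F') (B : T) :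
    woDiagram E F B ⟶ woDiagram E F' B where
  app X := Φ.app X.obj.right
  naturality := by
    intro X Y g
    dsimp [woDiagram]
    exact Φ.naturality g.hom.right

/-- The map `RΦ_B : RF(B) ⟶ RF'(B)` induced by `Φ : F ⟶ F'`. -/
noncomputable def locMapNat {F F' : T ⥤ Ab.{u}} (Φ : F ⟶ F') (B : T) :
    loc E F B ⟶ loc E F' B :=
  colimMap (woWhisker E Φ B)

namespace CategoryTheory.Triangulated.Subcategory

variable {C : Type*} [Category C] [HasZeroObject C] [HasShift C ℤ] [Preadditive C]
  [∀ n : ℤ, (shiftFunctor C n).Additive] [Pretriangulated C] (S : Subcategory C)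

instance isTriangulated_P : ObjectProperty.IsTriangulated S.P where
  exists_zero := by
    obtain ⟨Z, hZ, h⟩ := S.zero'
    exact ⟨Z, hZ, h⟩
  isStableUnderShiftBy a := ⟨fun X hX => S.shift X a hX⟩
  ext₂' := S.ext₂'

lemma W_eq_trW : S.W = ObjectProperty.trW S.P := rfl

instance [IsTriangulated C] : S.W.IsMultiplicative := by
  rw [W_eq_trW]; infer_instance

instance [IsTriangulated C] : S.W.HasLeftCalculusOfFractions := by
  rw [W_eq_trW]; infer_instance

end CategoryTheory.Triangulated.Subcategory

namespace CategoryTheory.Pretriangulated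

variable {C : Type*} [Category C] [HasZeroObject C] [HasShift C ℤ] [Preadditive C]
  [∀ n : ℤ, (shiftFunctor C n).Additive] [Pretriangulated C] {X Y Z : C}
  {f : X ⟶ Y} {g : Y ⟶ Z} {h : Z ⟶ X⟦(1 : ℤ)⟧}

lemma exists_distTriang_mk_shift_neg_one (hT : Triangle.mk f g h ∈ distTriang C) :
    ∃ (e : Z⟦(-1 : ℤ)⟧ ⟶ X) (k : Y ⟶ Z⟦(-1 : ℤ)⟧⟦(1 : ℤ)⟧), Triangle.mk e f k ∈ distTriang C :=
  ⟨_, _, inv_rot_of_distTriang _ hT⟩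

lemma exists_map_eq_of_map_eq_zero (F : C ⥤ Ab.{u}) [F.IsHomological]
    (hT : Triangle.mk f g h ∈ distTriang C) {y : F.obj Y} (hy : F.map g y = 0) :
    ∃ x : F.obj X, F.map f x = y :=
  (ShortComplex.ab_exact_iff _).1 (F.map_distinguished_exact _ hT) y hy

end CategoryTheory.Pretriangulated

section FilteredColimit

variable {J : Type u} [SmallCategory J] [IsFiltered J] {D D' : J ⥤ Ab.{u}} (φ : D ⟶ D')
  [IsIso (colimMap φ)]

lemma exists_map_eq_zero_of_isIso_colimMap {j : J} {x : D.obj j} (hx : φ.app j x = 0) :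
    ∃ (k : J) (f : j ⟶ k), D.map f x = 0 := by
  have h : colimit.ι D j x = colimit.ι D j 0 := by
    apply (ConcreteCategory.bijective_of_isIso (colimMap φ)).1
    simp only [← ConcreteCategory.comp_apply, ι_colimMap, map_zero]
    rw [ConcreteCategory.comp_apply, hx, map_zero]
  obtain ⟨k, f, g, hfg⟩ := Concrete.colimit_exists_of_rep_eq D _ _ h
  exact ⟨k, f, hfg.trans (map_zero _)⟩

lemma exists_app_eq_map_of_isIso_colimMap {j : J} (x' : D'.obj j) :
    ∃ (k : J) (f : j ⟶ k) (y : D.obj k), φ.app k y = D'.map f x' := by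
  obtain ⟨ξ, hξ⟩ := (ConcreteCategory.bijective_of_isIso (colimMap φ)).2 (colimit.ι D' j x')
  obtain ⟨i, y, rfl⟩ := Concrete.colimit_exists_rep D ξ
  rw [← ConcreteCategory.comp_apply, ι_colimMap, ConcreteCategory.comp_apply] at hξ
  obtain ⟨k, f, g, hfg⟩ := Concrete.colimit_exists_of_rep_eq D' _ _ hξ
  exact ⟨k, g, D.map f y, by rw [NatTrans.naturality_apply, hfg]⟩

end FilteredColimit

section Filtered

instance [IsTriangulated T] (B : T) : IsFiltered (WoCat E B) where
  cocone_objs X Y := by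
    obtain ⟨ψ, hψ⟩ :=
      (MorphismProperty.RightFraction.mk X.obj.hom X.property Y.obj.hom).exists_leftFraction
    exact ⟨⟨Under.mk (Y.obj.hom ≫ ψ.s), E.W.comp_mem _ _ Y.property ψ.hs⟩,
      ObjectProperty.homMk (Under.homMk ψ.f hψ.symm),
      ObjectProperty.homMk (Under.homMk ψ.s rfl), trivial⟩
  cocone_maps X Y f g := by
    obtain ⟨Y', t, ht, hfg⟩ := MorphismProperty.HasLeftCalculusOfFractions.ext
      f.hom.right g.hom.right X.obj.hom X.property (by rw [Under.w f.hom, Under.w g.hom])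
    refine ⟨⟨Under.mk (Y.obj.hom ≫ t), E.W.comp_mem _ _ Y.property ht⟩,
      ObjectProperty.homMk (Under.homMk t rfl), ?_⟩
    ext
    simpa using hfg
  nonempty := ⟨⟨Under.mk (𝟙 B), E.W.id_mem B⟩⟩

instance inst_s19 (B : T) : IsFiltered (SuboCat E B) where
  cocone_objs X Y := by
    obtain ⟨Z, hZ, ⟨e : X.obj.left ⊞ Y.obj.left ≅ Z⟩⟩ :=
      ObjectProperty.ext_of_isTriangulatedClosed₂' E.P _
        (binaryBiproductTriangle_distinguished X.obj.left Y.obj.left) X.property Y.property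
    exact ⟨⟨Over.mk (e.inv ≫ biprod.desc X.obj.hom Y.obj.hom), hZ⟩,
      ObjectProperty.homMk (Over.homMk (biprod.inl ≫ e.hom) (by simp)),
      ObjectProperty.homMk (Over.homMk (biprod.inr ≫ e.hom) (by simp)), trivial⟩
  cocone_maps X Y f g := by
    obtain ⟨Z, hZ, b, c, hT⟩ :=
      ObjectProperty.distinguished_cocone_triangle E.P (f.hom.left - g.hom.left) X.property
        Y.property
    -- `Y ⟶ B` kills `f - g`, so it factors through the cone of `f - g`
    obtain ⟨d, hd⟩ := Triangle.yoneda_exact₂ _ hT Y.obj.hom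
      (by
        change (f.hom.left - g.hom.left) ≫ Y.obj.hom = 0
        rw [Preadditive.sub_comp, Over.w f.hom, Over.w g.hom, sub_self])
    refine ⟨⟨Over.mk d, hZ⟩, ObjectProperty.homMk (Over.homMk b hd.symm), ?_⟩
    ext
    exact sub_eq_zero.1
      ((Preadditive.sub_comp _ _ _).symm.trans (comp_distTriang_mor_zero₁₂ _ hT))
  nonempty := by
    obtain ⟨Z, -, hZ⟩ := E.zero'
    exact ⟨⟨Over.mk (0 : Z ⟶ B), hZ⟩⟩

end Filtered

section Chase

variable {E} {F F' : T ⥤ Ab.{u}} (Φ : F ⟶ F') {B : T}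

lemma exists_W_map_eq_zero_of_app_eq_zero [IsTriangulated T] (hloc : IsIso (locMapNat E Φ B))
    {x : F.obj B} (hx : Φ.app B x = 0) : ∃ (C : T) (s : B ⟶ C), E.W s ∧ F.map s x = 0 := by
  have : IsIso (colimMap (woWhisker E Φ B)) := hloc
  obtain ⟨j, f, hf⟩ := exists_map_eq_zero_of_isIso_colimMap (woWhisker E Φ B)
    (j := ⟨Under.mk (𝟙 B), E.W.id_mem B⟩) hx
  have hfj : f.hom.right = j.obj.hom := by simpa using Under.w f.hom
  exact ⟨_, _, j.property, hfj ▸ hf⟩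

lemma exists_W_app_eq_map [IsTriangulated T] (hloc : IsIso (locMapNat E Φ B))
    (x' : F'.obj B) :
    ∃ (C : T) (s : B ⟶ C) (_ : E.W s) (y : F.obj C), Φ.app C y = F'.map s x' := by
  have : IsIso (colimMap (woWhisker E Φ B)) := hloc
  obtain ⟨j, f, y, hy⟩ := exists_app_eq_map_of_isIso_colimMap (woWhisker E Φ B)
    (j := ⟨Under.mk (𝟙 B), E.W.id_mem B⟩) x'
  have hfj : f.hom.right = j.obj.hom := by simpa using Under.w f.hom
  exact ⟨_, _, j.property, y, hfj ▸ hy⟩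

lemma exists_over_map_eq_zero (hcoloc : IsIso (colocMapNat E Φ B)) {X : T} (hX : E.P X)
    (e : X ⟶ B) {x : F.obj X} (hx : Φ.app X x = 0) :
    ∃ (X' : T) (_ : E.P X') (a : X ⟶ X') (e' : X' ⟶ B), a ≫ e' = e ∧ F.map a x = 0 := by
  have : IsIso (colimMap (suboWhisker E Φ B)) := hcoloc
  obtain ⟨k, f, hf⟩ := exists_map_eq_zero_of_isIso_colimMap (suboWhisker E Φ B)
    (j := ⟨Over.mk e, hX⟩) hx
  exact ⟨_, k.property, f.hom.left, k.obj.hom, Over.w f.hom, hf⟩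

lemma map_eq_zero_of_app_eq_zero (hcoloc : IsIso (colocMapNat E Φ B)) {X : T} (hX : E.P X)
    (e : X ⟶ B) {x : F.obj X} (hx : Φ.app X x = 0) : F.map e x = 0 := by
  obtain ⟨X', -, a, e', rfl, hax⟩ := exists_over_map_eq_zero Φ hcoloc hX e hx
  rw [Functor.map_comp, ConcreteCategory.comp_apply, hax, map_zero]

lemma map_mem_range_app (hcoloc : IsIso (colocMapNat E Φ B)) {X : T} (hX : E.P X)
    (e : X ⟶ B) (v : F'.obj X) : F'.map e v ∈ Set.range (Φ.app B) := by
  have : IsIso (colimMap (suboWhisker E Φ B)) := hcoloc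
  obtain ⟨k, f, u, hu⟩ := exists_app_eq_map_of_isIso_colimMap (suboWhisker E Φ B)
    (j := ⟨Over.mk e, hX⟩) v
  refine ⟨F.map k.obj.hom u, ?_⟩
  change Φ.app k.obj.left u = F'.map f.hom.left v at hu
  calc Φ.app B (F.map k.obj.hom u) = F'.map k.obj.hom (Φ.app k.obj.left u) :=
        NatTrans.naturality_apply Φ _ u
    _ = F'.map e v := by
        rw [hu, ← ConcreteCategory.comp_apply, ← Functor.map_comp, Over.w f.hom]
        rfl

variable [F.IsHomological] [F'.IsHomological]

lemma mem_range_app_of_distTriang (hcoloc : IsIso (colocMapNat E Φ B)) {D E₁ : T}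
    {t : B ⟶ D} {p : D ⟶ E₁} {q : E₁ ⟶ B⟦(1 : ℤ)⟧} (hT : Triangle.mk t p q ∈ distTriang T)
    (hE₁ : E.P E₁) {x' : F'.obj B} {y : F.obj D} (hy : F.map p y = 0)
    (hyx : Φ.app D y = F'.map t x') : x' ∈ Set.range (Φ.app B) := by
  obtain ⟨x, rfl⟩ := exists_map_eq_of_map_eq_zero F hT hy
  have hdiff : F'.map t (Φ.app B x - x') = 0 := by
    rw [map_sub, ← NatTrans.naturality_apply]
    exact sub_eq_zero.2 hyx
  obtain ⟨e, _, hT'⟩ := exists_distTriang_mk_shift_neg_one hT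
  obtain ⟨v, hv⟩ := exists_map_eq_of_map_eq_zero F' hT' hdiff
  obtain ⟨w, hw⟩ := map_mem_range_app Φ hcoloc (E.shift _ (-1) hE₁) e v
  refine ⟨x - w, ?_⟩
  rw [map_sub, hw, hv, sub_sub_cancel]

lemma app_surjective [IsTriangulated T] (hloc : IsIso (locMapNat E Φ B))
    (hcoloc : IsIso (colocMapNat E Φ B)) (hcoloc₁ : IsIso (colocMapNat E Φ (B⟦(1 : ℤ)⟧))) :
    Function.Surjective (Φ.app B) := by
  intro x'
  obtain ⟨C, s, ⟨E₀, p, q, hT, hE₀⟩, y, hy⟩ := exists_W_app_eq_map Φ hloc x'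
  have hsp : s ≫ p = 0 := comp_distTriang_mor_zero₁₂ _ hT
  have hpy : Φ.app E₀ (F.map p y) = 0 := by
    rw [NatTrans.naturality_apply, hy, ← ConcreteCategory.comp_apply, ← Functor.map_comp, hsp,
      Functor.map_zero, AddCommGrpCat.zero_apply]
  obtain ⟨E₁, hE₁, f, q₁, hfq, hf⟩ := exists_over_map_eq_zero Φ hcoloc₁ hE₀ q hpy
  obtain ⟨D, t, p₁, hT₁⟩ := distinguished_cocone_triangle₂ q₁
  obtain ⟨(m : C ⟶ D), hm₁, hm₂⟩ := complete_distinguished_triangle_morphism₂ _ _ hT hT₁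
    (𝟙 B) f (by
      change q ≫ (𝟙 B)⟦(1 : ℤ)⟧' = f ≫ q₁
      rw [CategoryTheory.Functor.map_id, comp_id, hfq])
  have hsm : s ≫ m = t := hm₁.trans (id_comp t)
  have hpf : p ≫ f = m ≫ p₁ := hm₂
  refine mem_range_app_of_distTriang Φ hcoloc hT₁ hE₁ (y := F.map m y) ?_ ?_
  · rw [← ConcreteCategory.comp_apply, ← Functor.map_comp, ← hpf, Functor.map_comp,
      ConcreteCategory.comp_apply, hf]
  · rw [NatTrans.naturality_apply, hy, ← ConcreteCategory.comp_apply, ← Functor.map_comp, hsm]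

lemma app_injective [IsTriangulated T] (hloc : IsIso (locMapNat E Φ B))
    (hcoloc : IsIso (colocMapNat E Φ B)) (hsurj : ∀ X : T, Function.Surjective (Φ.app X)) :
    Function.Injective (Φ.app B) := by
  rw [injective_iff_map_eq_zero]
  intro x hx
  obtain ⟨C, s, hs, hsx⟩ := exists_W_map_eq_zero_of_app_eq_zero Φ hloc hx
  obtain ⟨X, e, _, hT, hX⟩ := (ObjectProperty.trW_iff' E.P s).1 hs
  obtain ⟨y, rfl⟩ := exists_map_eq_of_map_eq_zero F hT hsx
  have hΦy : F'.map e (Φ.app X y) = 0 := by rwa [← NatTrans.naturality_apply]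
  obtain ⟨d, _, hT'⟩ := exists_distTriang_mk_shift_neg_one hT
  have hde : d ≫ e = 0 := comp_distTriang_mor_zero₁₂ _ hT'
  obtain ⟨v', hv'⟩ := exists_map_eq_of_map_eq_zero F' hT' hΦy
  obtain ⟨v, rfl⟩ := hsurj _ v'
  -- correcting `y` by `F d v` keeps its image in `F B` and makes it vanish under `Φ`
  have hz : Φ.app X (y - F.map d v) = 0 := by
    rw [map_sub, NatTrans.naturality_apply]
    exact sub_eq_zero.2 hv'.symm
  have hdv : F.map e (F.map d v) = 0 := by
    rw [← ConcreteCategory.comp_apply, ← Functor.map_comp, hde, Functor.map_zero,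
      AddCommGrpCat.zero_apply]
  simpa [hdv] using map_eq_zero_of_app_eq_zero Φ hcoloc hX e hz

end Chase

theorem isIso_of_isIso_loc_coloc [IsTriangulated T]
    {F F' : T ⥤ Ab.{u}} [F.IsHomological] [F'.IsHomological] (Φ : F ⟶ F')
    (hloc : ∀ B : T, IsIso (locMapNat E Φ B))
    (hcoloc : ∀ B : T, IsIso (colocMapNat E Φ B)) :
    ∀ B : T, IsIso (Φ.app B) := by
  have hsurj (B : T) : Function.Surjective (Φ.app B) :=
    app_surjective Φ (hloc B) (hcoloc B) (hcoloc _)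
  intro B
  exact (ConcreteCategory.isIso_iff_bijective _).2
    ⟨app_injective Φ (hloc B) (hcoloc B) hsurj, hsurj B⟩
end
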